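/- Let V be a variety of τ-algebras, let K ⊆ V_fg be closed under finitely generated subalgebras, and suppose the corresponding family B^K is closed under finite intersections. Then K is closed under finitely generated subalgebras of finite products: every algebra that embeds as a finitely generated subalgebra of a finite product A₁ × ⋯ × A_n of members of K belongs to K. -/

import Mathlib

/-! Universal-algebra preamble: functional signatures, algebras (with nonempty
carriers, as usual in universal algebra), terms, homomorphisms, congruences,
quotients, free algebras, and the operators/uniformities of the paper.

Families indexed over the components of a clone are indexed by `k : ℕ`, where
index `k` stands for the component of arity `k + 1` (so all arities `≥ 1`). -/

/-- A functional signature: a type of function symbols together with arities. -/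
structure Signature : Type 1 where
  F : Type
  arity : F → ℕ

/-- A τ-algebra: a nonempty carrier together with an interpretation of each symbol. -/
structure Alg (σ : Signature) : Type 1 where
  carrier : Type
  nonempty : Nonempty carrier
  op : ∀ f : σ.F, (Fin (σ.arity f) → carrier) → carrier

/-- Abstract τ-terms over the variables x_1, …, x_n. -/
inductive Trm (σ : Signature) (n : ℕ) : Type
  | var : Fin n → Trm σ n
  | app : ∀ f : σ.F, (Fin (σ.arity f) → Trm σ n) → Trm σ n

variable {σ : Signature}

/-- Evaluation of a term in an algebra under a valuation of the variables. -/
def Trm.eval {n : ℕ} (A : Alg σ) (v : Fin n → A.carrier) : Trm σ n → A.carrier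
  | .var i => v i
  | .app f ts => A.op f fun i => Trm.eval A v (ts i)

/-- The term operation `t^A` induced on `A` by the term `t`. -/
def termOp {n : ℕ} (A : Alg σ) (t : Trm σ n) : (Fin n → A.carrier) → A.carrier :=
  fun v => t.eval A v

/-- Homomorphisms of τ-algebras. -/
def IsHom (A B : Alg σ) (h : A.carrier → B.carrier) : Prop :=
  ∀ (f : σ.F) (x : Fin (σ.arity f) → A.carrier), h (A.op f x) = B.op f fun i => h (x i)

/-- Isomorphism of τ-algebras. -/
def Isomorphic (A B : Alg σ) : Prop :=
  ∃ h : A.carrier → B.carrier, IsHom A B h ∧ Function.Bijective h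

/-- Membership in the subuniverse generated by `S`. -/
inductive InClosure (A : Alg σ) (S : Set A.carrier) : A.carrier → Prop
  | base : ∀ a ∈ S, InClosure A S a
  | app : ∀ (f : σ.F) (x : Fin (σ.arity f) → A.carrier),
      (∀ i, InClosure A S (x i)) → InClosure A S (A.op f x)

/-- An algebra is finitely generated if a finite subset generates it. -/
def FinGen (A : Alg σ) : Prop :=
  ∃ S : Set A.carrier, S.Finite ∧ ∀ a, InClosure A S a

/-- Product of a family of algebras. -/
def PiAlg {ι : Type} (A : ι → Alg σ) : Alg σ where
  carrier := ∀ i, (A i).carrier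
  nonempty := ⟨fun i => Classical.choice (A i).nonempty⟩
  op f x := fun i => (A i).op f fun j => x j i

/-- A congruence: an equivalence relation compatible with all operations. -/
def IsCongruence (A : Alg σ) (r : A.carrier → A.carrier → Prop) : Prop :=
  Equivalence r ∧ ∀ (f : σ.F) (x y : Fin (σ.arity f) → A.carrier),
    (∀ i, r (x i) (y i)) → r (A.op f x) (A.op f y)

/-- Bundled congruences on an algebra. -/
structure Cong (A : Alg σ) : Type where
  r : A.carrier → A.carrier → Prop
  iscon : IsCongruence A r

/-- The quotient algebra of `A` by (a relation which is intended to be) a congruence. -/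
noncomputable def quotAlg (A : Alg σ) (r : A.carrier → A.carrier → Prop) : Alg σ where
  carrier := Quot r
  nonempty := ⟨Quot.mk r (Classical.choice A.nonempty)⟩
  op f x := Quot.mk r (A.op f fun i => (x i).out)

/-- The subalgebra of `A` on a nonempty subset closed under the operations. -/
def subAlg (A : Alg σ) (S : Set A.carrier) (hne : S.Nonempty)
    (hcl : ∀ (f : σ.F) (x : Fin (σ.arity f) → A.carrier), (∀ i, x i ∈ S) → A.op f x ∈ S) :
    Alg σ where
  carrier := {a : A.carrier // a ∈ S}
  nonempty := ⟨⟨hne.choose, hne.choose_spec⟩⟩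
  op f x := ⟨A.op f fun i => (x i).1, hcl f _ fun i => (x i).2⟩

/-- The subalgebra of `A` generated by a nonempty subset `S`. -/
def genSubAlg (A : Alg σ) (S : Set A.carrier) (hne : S.Nonempty) : Alg σ where
  carrier := {a : A.carrier // InClosure A S a}
  nonempty := ⟨⟨hne.choose, InClosure.base _ hne.choose_spec⟩⟩
  op f x := ⟨A.op f fun i => (x i).1, InClosure.app f _ fun i => (x i).2⟩

/-- H: homomorphic images of members of `K`. -/
def Hcl (K : Set (Alg σ)) : Set (Alg σ) :=
  {B | ∃ A ∈ K, ∃ h : A.carrier → B.carrier, IsHom A B h ∧ Function.Surjective h}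

/-- I: isomorphic copies of members of `K`. -/
def Icl (K : Set (Alg σ)) : Set (Alg σ) := {B | ∃ A ∈ K, Isomorphic A B}

/-- S: isomorphic copies of subalgebras (i.e. algebras embedding into members) of `K`. -/
def Scl (K : Set (Alg σ)) : Set (Alg σ) :=
  {B | ∃ A ∈ K, ∃ e : B.carrier → A.carrier, IsHom B A e ∧ Function.Injective e}

/-- P_f: isomorphic copies of finite (nonempty) products of members of `K`. -/
def Pfcl (K : Set (Alg σ)) : Set (Alg σ) :=
  {B | ∃ (n : ℕ) (A : Fin (n + 1) → Alg σ), (∀ i, A i ∈ K) ∧ Isomorphic (PiAlg A) B}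

/-- S_f: isomorphic copies of finitely generated subalgebras of members of `K`. -/
def Sf (K : Set (Alg σ)) : Set (Alg σ) :=
  {B | FinGen B ∧ ∃ A ∈ K, ∃ e : B.carrier → A.carrier, IsHom B A e ∧ Function.Injective e}

/-- S P_f: isomorphic copies of finitely generated subalgebras of finite products
of members of `K`. -/
def SPf (K : Set (Alg σ)) : Set (Alg σ) :=
  {B | FinGen B ∧ ∃ (n : ℕ) (A : Fin (n + 1) → Alg σ), (∀ i, A i ∈ K) ∧
    ∃ e : B.carrier → (PiAlg A).carrier, IsHom B (PiAlg A) e ∧ Function.Injective e}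

/-- A pseudovariety of finitely generated algebras: a class of finitely generated
algebras closed under homomorphic images and under isomorphic copies of finitely
generated subalgebras of finite products of its members. -/
def IsPseudovarietyFG (C : Set (Alg σ)) : Prop :=
  (∀ A ∈ C, FinGen A) ∧ Hcl C ⊆ C ∧ SPf C ⊆ C

/-- A pseudovariety of finite algebras: a class of finite algebras closed under
finite products, subalgebras and homomorphic images. -/
def IsPseudovarietyFin (C : Set (Alg σ)) : Prop :=
  (∀ A ∈ C, Finite A.carrier) ∧ Hcl C ⊆ C ∧ Scl C ⊆ C ∧ Pfcl C ⊆ C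

/-- A variety: a class closed under arbitrary products, subalgebras and
homomorphic images. -/
def IsVariety (V : Set (Alg σ)) : Prop :=
  (∀ (ι : Type) (A : ι → Alg σ), (∀ i, A i ∈ V) → PiAlg A ∈ V) ∧
  Scl V ⊆ V ∧ Hcl V ⊆ V

/-- The identities of the class `C`: `s` and `t` are identified iff they induce the
same operation on every member of `C`. -/
def FreeCon (C : Set (Alg σ)) (n : ℕ) : Trm σ n → Trm σ n → Prop :=
  fun s t => ∀ A ∈ C, ∀ v : Fin n → A.carrier, s.eval A v = t.eval A v

/-- `freeAlg C k` is `F_{k+1}^C`, the free algebra for `C` on `k + 1` generators: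
the term algebra on the variables `x_1, …, x_{k+1}` modulo the identities of `C`.
(The index `k` stands for arity `k + 1`, so all components have arity `≥ 1`.) -/
noncomputable def freeAlg (C : Set (Alg σ)) (k : ℕ) : Alg σ where
  carrier := Quot (FreeCon C (k + 1))
  nonempty := ⟨Quot.mk _ (Trm.var 0)⟩
  op f x := Quot.mk _ (Trm.app f fun i => (x i).out)

/-- The finitely generated members of `V`. -/
def Vfg (V : Set (Alg σ)) : Set (Alg σ) := {A | A ∈ V ∧ FinGen A}

/-- `B^K`: the congruences of the free algebras whose quotient is isomorphic to a
member of `K`. -/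
def BK (V K : Set (Alg σ)) (k : ℕ) : Set (Cong (freeAlg V k)) :=
  {θ | quotAlg (freeAlg V k) θ.r ∈ Icl K}

/-- `K^B`: isomorphic copies of the quotients of free algebras by congruences in `B`. -/
def KB (V : Set (Alg σ)) (B : ∀ k : ℕ, Set (Cong (freeAlg V k))) : Set (Alg σ) :=
  Icl {A | ∃ (k : ℕ), ∃ θ ∈ B k, A = quotAlg (freeAlg V k) θ.r}

/-- `θ/t̄`: the inverse substitution of the congruence `θ` along the tuple `t̄`;
`s (θ/t̄) s'` iff `s(t₁,…,t_m) θ s'(t₁,…,t_m)`. -/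
noncomputable def conSubstRel {V : Set (Alg σ)} {k : ℕ} (θ : Cong (freeAlg V k)) {m : ℕ}
    (t : Fin (m + 1) → (freeAlg V k).carrier) :
    (freeAlg V m).carrier → (freeAlg V m).carrier → Prop :=
  fun s s' => θ.r (Trm.eval (freeAlg V k) t s.out) (Trm.eval (freeAlg V k) t s'.out)

/-- A family of congruences is closed under inverse substitution. -/
def InvSubstClosed (V : Set (Alg σ)) (B : ∀ k : ℕ, Set (Cong (freeAlg V k))) : Prop :=
  ∀ (k m : ℕ), ∀ θ ∈ B k, ∀ t : Fin (m + 1) → (freeAlg V k).carrier,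
    ∃ θ' ∈ B m, θ'.r = conSubstRel θ t

/-- A family of congruences is closed under finite intersections (componentwise). -/
def InterClosed (V : Set (Alg σ)) (B : ∀ k : ℕ, Set (Cong (freeAlg V k))) : Prop :=
  ∀ (k n : ℕ) (θs : Fin (n + 1) → Cong (freeAlg V k)), (∀ i, θs i ∈ B k) →
    ∃ θ' ∈ B k, θ'.r = fun a b => ∀ i, (θs i).r a b

/-- A family of congruences is upward closed (componentwise). -/
def UpClosed (V : Set (Alg σ)) (B : ∀ k : ℕ, Set (Cong (freeAlg V k))) : Prop :=
  ∀ (k : ℕ), ∀ θ ∈ B k, ∀ ψ : Cong (freeAlg V k), (∀ a b, θ.r a b → ψ.r a b) → ψ ∈ B k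

/-- A filter on `X × X` is a uniformity: every entourage contains the diagonal, the
converse of an entourage is an entourage, and the generalised triangle inequality. -/
def IsUniformity {X : Type} (u : Filter (X × X)) : Prop :=
  (∀ U ∈ u, ∀ x : X, (x, x) ∈ U) ∧
  (∀ U ∈ u, {p : X × X | (p.2, p.1) ∈ U} ∈ u) ∧
  (∀ U ∈ u, ∃ W ∈ u, ∀ x y z : X, (x, y) ∈ W → (y, z) ∈ W → (x, z) ∈ U)

/-- `U^C` (the component of index `k`, i.e. of arity `k + 1`): the filter on
`F_{k+1}^V × F_{k+1}^V` generated by the congruences `θ` of `F_{k+1}^V` such that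
`F_{k+1}^V/θ` is isomorphic to a member of `C`. -/
noncomputable def unifC (V C : Set (Alg σ)) (k : ℕ) :
    Filter ((freeAlg V k).carrier × (freeAlg V k).carrier) :=
  Filter.generate
    {U | ∃ θ : Cong (freeAlg V k), quotAlg (freeAlg V k) θ.r ∈ Icl C ∧ U = {p | θ.r p.1 p.2}}

/-- The `(k+1)`-ary part of `Clo(A)`: the `(k+1)`-ary term operations of `A`. -/
def CloK (A : Alg σ) (k : ℕ) : Type :=
  {g : (Fin (k + 1) → A.carrier) → A.carrier // ∃ t : Trm σ (k + 1), g = termOp A t}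

/-- The uniformity of pointwise convergence on the `(k+1)`-ary part of `Clo(A)`:
generated by the sets `U_ā = {(f, g) | f(ā) = g(ā)}`. -/
noncomputable def ptwUnif (A : Alg σ) (k : ℕ) : Filter (CloK A k × CloK A k) :=
  Filter.generate {U | ∃ a : Fin (k + 1) → A.carrier, U = {p | p.1.1 a = p.2.1 a}}

/-- The natural map from the free algebra for `C` onto `Clo(A)`, sending the class
of a term `t` to the term operation `t^A`. -/
noncomputable def natMap (C : Set (Alg σ)) (A : Alg σ) (k : ℕ) :
    (freeAlg C k).carrier → CloK A k :=
  fun q => ⟨termOp A q.out, q.out, rfl⟩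

/-- The natural map between the free algebras of two classes (class of `t` to
class of `t`). -/
noncomputable def freeNatMap (C D : Set (Alg σ)) (k : ℕ) :
    (freeAlg C k).carrier → (freeAlg D k).carrier :=
  fun q => Quot.mk _ q.out

/-- The natural map `Clo(A) → Clo(B)`, sending `t^A` to `t^B`. -/
noncomputable def cloNatMap (A B : Alg σ) (k : ℕ) : CloK A k → CloK B k :=
  fun g => ⟨termOp B (Classical.choose g.2), Classical.choose g.2, rfl⟩

/-- The variety generated by `A`. -/
def varietyGen (A : Alg σ) : Set (Alg σ) :=
  {B | ∀ V : Set (Alg σ), IsVariety V → A ∈ V → B ∈ V}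

/-- The pseudovariety generated by `A`: the smallest class containing `A` closed
under finite products, subalgebras and homomorphic images. -/
def psvGen (A : Alg σ) : Set (Alg σ) :=
  {B | ∀ C : Set (Alg σ), A ∈ C → Hcl C ⊆ C → Scl C ⊆ C → Pfcl C ⊆ C → B ∈ C}

/-- The pseudovariety of finitely generated algebras generated by `A`: the finitely
generated members of the pseudovariety generated by `A`. -/
def psvFgGen (A : Alg σ) : Set (Alg σ) := {B | FinGen B ∧ B ∈ psvGen A}

/-! Write `B` as `F/ker π` for a surjection `π` from a finitely generated free algebra `F` of `V`.
The congruences `θᵢ = ker (prᵢ ∘ e ∘ π)` lie in `B^K`, because `F/θᵢ` is finitely generated and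
embeds into `Aᵢ`. As `e` is injective, `ker π = ⋂ θᵢ`, which lies in `B^K` by hypothesis; so
`B ≅ F/ker π` is isomorphic to a member of `K`, and closure under finitely generated subalgebras
puts `B` itself in `K`. -/

theorem IsHom.comp {A B C : Alg σ} {h : A.carrier → B.carrier} {g : B.carrier → C.carrier}
    (hg : IsHom B C g) (hh : IsHom A B h) : IsHom A C (g ∘ h) := by
  intro f x
  simp only [Function.comp_apply, hh f x, hg f]

theorem isHom_pi_eval {ι : Type} (A : ι → Alg σ) (i : ι) :
    IsHom (PiAlg A) (A i) (fun p => p i) :=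
  fun _ _ => rfl

theorem Isomorphic.refl (A : Alg σ) : Isomorphic A A :=
  ⟨id, fun _ _ => rfl, Function.bijective_id⟩

theorem Isomorphic.symm {A B : Alg σ} (h : Isomorphic A B) : Isomorphic B A := by
  obtain ⟨h, hh, hbij⟩ := h
  have hinv := Function.rightInverse_surjInv hbij.2
  refine ⟨Function.surjInv hbij.2, fun f x => hbij.1 ?_, (Function.bijective_iff_has_inverse.2
    ⟨h, hinv, Function.leftInverse_surjInv hbij⟩)⟩
  simp only [hinv _, hh f]

theorem Isomorphic.trans {A B C : Alg σ} (h₁ : Isomorphic A B) (h₂ : Isomorphic B C) :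
    Isomorphic A C := by
  obtain ⟨f, hf, hfb⟩ := h₁
  obtain ⟨g, hg, hgb⟩ := h₂
  exact ⟨g ∘ f, hg.comp hf, hgb.comp hfb⟩

theorem InClosure.mono {A : Alg σ} {S T : Set A.carrier} (hST : S ⊆ T) {a : A.carrier}
    (h : InClosure A S a) : InClosure A T a := by
  induction h with
  | base a ha => exact .base a (hST ha)
  | app f x _ ih => exact .app f x ih

theorem InClosure.image {A C : Alg σ} {h : A.carrier → C.carrier} (hh : IsHom A C h)
    {S : Set A.carrier} {a : A.carrier} (ha : InClosure A S a) : InClosure C (h '' S) (h a) := by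
  induction ha with
  | base a haS => exact .base _ ⟨a, haS, rfl⟩
  | app f x _ ih => exact hh f x ▸ .app f _ ih

theorem InClosure.mem_range {A C : Alg σ} {h : A.carrier → C.carrier} (hh : IsHom A C h)
    {S : Set C.carrier} (hS : S ⊆ Set.range h) {c : C.carrier} (hc : InClosure C S c) :
    c ∈ Set.range h := by
  induction hc with
  | base c hc => exact hS hc
  | app f x _ ih =>
    choose a ha using ih
    exact ⟨A.op f a, by simp only [hh f, ha]⟩

theorem FinGen.of_surjective {A C : Alg σ} {h : A.carrier → C.carrier} (hh : IsHom A C h)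
    (hs : Function.Surjective h) (hA : FinGen A) : FinGen C := by
  obtain ⟨S, hS, hgen⟩ := hA
  refine ⟨h '' S, hS.image h, fun c => ?_⟩
  obtain ⟨a, rfl⟩ := hs c
  exact (hgen a).image hh

/-- The tuple has length `k + 1` to match the generators of `freeAlg V k`. -/
theorem FinGen.exists_generating_tuple {B : Alg σ} (hB : FinGen B) :
    ∃ (k : ℕ) (v : Fin (k + 1) → B.carrier), ∀ b, InClosure B (Set.range v) b := by
  obtain ⟨S, hS, hgen⟩ := hB
  obtain ⟨k, v, hv⟩ := hS.fin_embedding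
  refine ⟨k, Fin.cons (Classical.choice B.nonempty) v, fun b => (hgen b).mono ?_⟩
  rw [Fin.range_cons, ← hv]
  exact Set.subset_insert _ _

theorem mem_of_embedding {K : Set (Alg σ)} (hSf : Sf K = K) {A B : Alg σ} (hB : FinGen B)
    (hA : A ∈ K) {e : B.carrier → A.carrier} (he : IsHom B A e) (he_inj : Function.Injective e) :
    B ∈ K :=
  hSf ▸ ⟨hB, A, hA, e, he, he_inj⟩

theorem mem_of_isomorphic {K : Set (Alg σ)} (hSf : Sf K = K) {A B : Alg σ} (hB : FinGen B)
    (hA : A ∈ K) (hAB : Isomorphic A B) : B ∈ K := by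
  obtain ⟨e, he, hbij⟩ := hAB.symm
  exact mem_of_embedding hSf hB hA he hbij.1

theorem IsCongruence.isHom_mk {A : Alg σ} {r : A.carrier → A.carrier → Prop}
    (hr : IsCongruence A r) : IsHom A (quotAlg A r) (Quot.mk r) := by
  intro f x
  refine Quot.sound (hr.2 f _ _ fun i => hr.1.symm ?_)
  exact hr.1.eqvGen_iff.1 (Quot.eqvGen_exact (Quot.out_eq (Quot.mk r (x i))))

theorem quot_lift_eq_out {α β : Sort*} {r : α → α → Prop} (f : α → β)
    (hf : ∀ a b, r a b → f a = f b) (q : Quot r) : Quot.lift f hf q = f q.out :=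
  congrArg (Quot.lift f hf) q.out_eq.symm

def kerCong {A C : Alg σ} {h : A.carrier → C.carrier} (hh : IsHom A C h) : Cong A where
  r a b := h a = h b
  iscon := ⟨⟨fun _ => rfl, Eq.symm, Eq.trans⟩, fun f x y hxy => by
    simp only [hh f, funext hxy]⟩

theorem isHom_kerLift {A C : Alg σ} {h : A.carrier → C.carrier} (hh : IsHom A C h) :
    IsHom (quotAlg A (kerCong hh).r) C (Quot.lift h fun _ _ hab => hab) := by
  intro f x
  change h (A.op f fun i => (x i).out) = _
  rw [hh f]
  exact congrArg (C.op f) (funext fun i => (quot_lift_eq_out h _ (x i)).symm)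

theorem kerLift_injective {A C : Alg σ} {h : A.carrier → C.carrier} (hh : IsHom A C h) :
    Function.Injective
      (Quot.lift h fun _ _ hab => hab : (quotAlg A (kerCong hh).r).carrier → C.carrier) := by
  rintro ⟨a⟩ ⟨b⟩ hab
  exact Quot.sound hab

theorem isomorphic_quotAlg_kerCong {A C : Alg σ} {h : A.carrier → C.carrier} (hh : IsHom A C h)
    (hs : Function.Surjective h) : Isomorphic (quotAlg A (kerCong hh).r) C :=
  ⟨_, isHom_kerLift hh, kerLift_injective hh, fun c => (hs c).elim fun a ha => ⟨Quot.mk _ a, ha⟩⟩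

theorem quotAlg_kerCong_mem {K : Set (Alg σ)} (hSf : Sf K = K) {A C : Alg σ} (hA : FinGen A)
    (hC : C ∈ K) {h : A.carrier → C.carrier} (hh : IsHom A C h) :
    quotAlg A (kerCong hh).r ∈ K :=
  mem_of_embedding hSf (hA.of_surjective (kerCong hh).iscon.isHom_mk Quot.mk_surjective) hC
    (isHom_kerLift hh) (kerLift_injective hh)

noncomputable def freeLift {V : Set (Alg σ)} {A : Alg σ} (hA : A ∈ V) {k : ℕ}
    (v : Fin (k + 1) → A.carrier) : (freeAlg V k).carrier → A.carrier :=
  Quot.lift (Trm.eval A v) fun _ _ h => h A hA v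

theorem freeLift_out {V : Set (Alg σ)} {A : Alg σ} (hA : A ∈ V) {k : ℕ}
    (v : Fin (k + 1) → A.carrier) (q : (freeAlg V k).carrier) :
    freeLift hA v q = q.out.eval A v :=
  quot_lift_eq_out _ _ q

theorem isHom_freeLift {V : Set (Alg σ)} {A : Alg σ} (hA : A ∈ V) {k : ℕ}
    (v : Fin (k + 1) → A.carrier) : IsHom (freeAlg V k) A (freeLift hA v) := by
  intro f x
  change A.op f (fun i => Trm.eval A v (x i).out) = _
  exact congrArg (A.op f) (funext fun i => (freeLift_out hA v (x i)).symm)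

theorem freeLift_surjective {V : Set (Alg σ)} {A : Alg σ} (hA : A ∈ V) {k : ℕ}
    {v : Fin (k + 1) → A.carrier} (hv : ∀ a, InClosure A (Set.range v) a) :
    Function.Surjective (freeLift hA v) := by
  refine fun a => (hv a).mem_range (isHom_freeLift hA v) ?_
  rintro _ ⟨j, rfl⟩
  exact ⟨Quot.mk _ (.var j), rfl⟩

theorem freeAlg_op_mk (V : Set (Alg σ)) (k : ℕ) (f : σ.F) (ts : Fin (σ.arity f) → Trm σ (k + 1)) :
    (freeAlg V k).op f (fun i => Quot.mk _ (ts i)) = Quot.mk _ (.app f ts) := by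
  refine Quot.sound fun A hA w => ?_
  change A.op f (fun i => Trm.eval A w (Quot.mk _ (ts i)).out) = A.op f _
  exact congrArg (A.op f) (funext fun i => (freeLift_out hA w _).symm)

theorem freeAlg_finGen (V : Set (Alg σ)) (k : ℕ) : FinGen (freeAlg V k) := by
  refine ⟨Set.range fun j => Quot.mk _ (.var j), Set.finite_range _, ?_⟩
  rintro ⟨t⟩
  induction t with
  | var j => exact .base _ ⟨j, rfl⟩
  | app f ts ih => exact freeAlg_op_mk V k f ts ▸ .app f _ ih

/-- If `K ⊆ V_fg` is closed under finitely generated subalgebras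
and `B^K` is closed under finite intersections, then `K` is closed under finitely
generated subalgebras of finite products: every algebra embedding as a finitely
generated subalgebra into a finite product `A₁ × ⋯ × A_n` of members of `K`
belongs to `K`. -/
theorem SPf_of_interClosed {σ : Signature} (V : Set (Alg σ)) (hV : IsVariety V)
    (K : Set (Alg σ)) (hK : K ⊆ Vfg V) (hSf : Sf K = K)
    (hInter : InterClosed V (BK V K)) :
    ∀ B : Alg σ, FinGen B → ∀ (n : ℕ) (A : Fin (n + 1) → Alg σ), (∀ i, A i ∈ K) →
      ∀ e : B.carrier → (PiAlg A).carrier, IsHom B (PiAlg A) e →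
        Function.Injective e → B ∈ K := by
  intro B hB n A hA e he he_inj
  have hBV : B ∈ V := hV.2.1 ⟨PiAlg A, hV.1 _ A fun i => (hK (hA i)).1, e, he, he_inj⟩
  obtain ⟨k, v, hv⟩ := hB.exists_generating_tuple
  have hπ := isHom_freeLift hBV v
  have hθ : ∀ i, kerCong ((isHom_pi_eval A i).comp (he.comp hπ)) ∈ BK V K k := fun i =>
    ⟨_, quotAlg_kerCong_mem hSf (freeAlg_finGen V k) (hA i) _, .refl _⟩
  obtain ⟨θ, hθK, hθr⟩ := hInter k n _ hθ
  have hker : θ.r = (kerCong hπ).r := by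
    rw [hθr]
    funext a b
    exact propext ⟨fun h => he_inj (funext h), fun h i => congrFun (congrArg e h) i⟩
  obtain ⟨A₀, hA₀, hiso⟩ : quotAlg (freeAlg V k) (kerCong hπ).r ∈ Icl K := hker ▸ hθK
  exact mem_of_isomorphic hSf hB hA₀
    (hiso.trans (isomorphic_quotAlg_kerCong hπ (freeLift_surjective hBV hv)))
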